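/- Postponement: in ℓΛ∞^{4S}, if M ⤳ N and N reduces at depth 0 to L, then there exists P such that M reduces at depth 0 to P and P ⤳ L. -/

import Mathlib

namespace LLInf

/-- Node labels of preterms of the linear infinitary λ-calculus ℓΛ∞. -/
inductive Shape where
  | var (x : ℕ)
  | app
  | labs (x : ℕ)
  | iabs (x : ℕ)
  | cabs (x : ℕ)
  | ibox
  | cbox
deriving DecidableEq

/-- Preterms: possibly infinite trees, encoded by their (partial) position function. -/
def T : Type := List ℕ → Option Shape

def mk0 (s : Shape) : T := fun p => if p = [] then some s else none

def mk1 (s : Shape) (M : T) : T := fun p =>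
  match p with
  | [] => some s
  | 0 :: q => M q
  | _ => none

def mk2 (M N : T) : T := fun p =>
  match p with
  | [] => some Shape.app
  | 0 :: q => M q
  | 1 :: q => N q
  | _ => none

def child (M : T) (i : ℕ) : T := fun p => M (i :: p)

def bindsX (x : ℕ) : Option Shape → Bool
  | some (Shape.labs y) => y == x
  | some (Shape.iabs y) => y == x
  | some (Shape.cabs y) => y == x
  | _ => false

/-- Capture-avoiding (shadowing-respecting) substitution on positional preterms. -/
def substF (x : ℕ) (N : T) : T → List ℕ → Option Shape
  | M, [] => if M [] = some (Shape.var x) then N [] else M []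
  | M, i :: q =>
      if M [] = some (Shape.var x) then N (i :: q)
      else if bindsX x (M []) then M (i :: q)
      else substF x N (child M i) q
termination_by M p => p.length

def subst (x : ℕ) (N M : T) : T := fun p => substF x N M p

def FreeAt (x : ℕ) : T → List ℕ → Prop
  | M, [] => M [] = some (Shape.var x)
  | M, i :: q => bindsX x (M []) = false ∧ FreeAt x (child M i) q
termination_by M p => p.length

/-- `x` occurs free in `M`. -/
def Free (x : ℕ) (M : T) : Prop := ∃ p, FreeAt x M p

def arity : Shape → ℕ
  | Shape.var _ => 0
  | Shape.app => 2
  | _ => 1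

/-- The position function is a coherent (constructor-generated) tree. -/
def IsPre (M : T) : Prop :=
  (∃ s, M [] = some s) ∧
  (∀ p t, M p = some t → ∀ i, (∃ s, M (p ++ [i]) = some s) ↔ i < arity t) ∧
  (∀ p q, M p = none → M (p ++ q) = none)

/-- Basic reduction of ℓΛ∞. -/
inductive Basic : T → T → Prop
  | lin (x : ℕ) (M N : T) :
      Basic (mk2 (mk1 (Shape.labs x) M) N) (subst x N M)
  | ind (x : ℕ) (M N : T) :
      Basic (mk2 (mk1 (Shape.iabs x) M) (mk1 Shape.ibox N)) (subst x N M)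
  | coi (x : ℕ) (M N : T) :
      Basic (mk2 (mk1 (Shape.cabs x) M) (mk1 Shape.cbox N)) (subst x N M)

/-- One-step reduction, indexed by the level: the list of boxes crossed,
`false` for an inductive box, `true` for a coinductive box. -/
inductive Red : List Bool → T → T → Prop
  | base {M N} : Basic M N → Red [] M N
  | appL {s M N} (P) : Red s M N → Red s (mk2 M P) (mk2 N P)
  | appR {s M N} (P) : Red s M N → Red s (mk2 P M) (mk2 P N)
  | labs {s M N} (x) : Red s M N → Red s (mk1 (Shape.labs x) M) (mk1 (Shape.labs x) N)
  | iabs {s M N} (x) : Red s M N → Red s (mk1 (Shape.iabs x) M) (mk1 (Shape.iabs x) N)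
  | cabs {s M N} (x) : Red s M N → Red s (mk1 (Shape.cabs x) M) (mk1 (Shape.cabs x) N)
  | ibox {s M N} : Red s M N → Red (false :: s) (mk1 Shape.ibox M) (mk1 Shape.ibox N)
  | cbox {s M N} : Red s M N → Red (true :: s) (mk1 Shape.cbox M) (mk1 Shape.cbox N)

def Red' (M N : T) : Prop := ∃ s, Red s M N

/-- Reduction at depth `n`: at a level crossing exactly `n` coinductive boxes. -/
def RedAt (n : ℕ) (M N : T) : Prop := ∃ s, s.count true = n ∧ Red s M N

def Star : T → T → Prop := Relation.ReflTransGen Red'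

/-! ### Environments and well-formation for ℓΛ∞ -/

inductive Pat where
  | lin | ind | coi
deriving DecidableEq

def Env : Type := ℕ → Option Pat

def Env.upd (Γ : Env) (x : ℕ) (p : Option Pat) : Env :=
  fun y => if y = x then p else Γ y

def Env.union (Γ Δ : Env) : Env := fun y => (Γ y).orElse (fun _ => Δ y)

def NoLin (Γ : Env) : Prop := ∀ y, Γ y ≠ some Pat.lin

def OnlyLinAt (Γ : Env) (x : ℕ) : Prop :=
  Γ x = some Pat.lin ∧ ∀ y, y ≠ x → Γ y ≠ some Pat.lin

/-- Splitting of an environment: nonlinear entries are shared, linear ones split. -/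
def Split (Γ Γ₁ Γ₂ : Env) : Prop := ∀ y,
  (Γ₁ y = Γ y ∧ Γ₂ y = Γ y ∧ Γ y ≠ some Pat.lin) ∨
  (Γ y = some Pat.lin ∧
    ((Γ₁ y = some Pat.lin ∧ Γ₂ y = none) ∨ (Γ₂ y = some Pat.lin ∧ Γ₁ y = none)))

/-- The inductive rules of the mixed formal system of ℓΛ∞, with `R` the
judgments provided by the coinductive layer. -/
inductive WFStep (R : Env → T → Prop) : Env → T → Prop
  | base {Γ M} : R Γ M → WFStep R Γ M
  | vl {Γ} (x) : OnlyLinAt Γ x → WFStep R Γ (mk0 (Shape.var x))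
  | vi {Γ} (x) : NoLin Γ → Γ x = some Pat.ind → WFStep R Γ (mk0 (Shape.var x))
  | vc {Γ} (x) : NoLin Γ → Γ x = some Pat.coi → WFStep R Γ (mk0 (Shape.var x))
  | app {Γ Γ₁ Γ₂ M N} : Split Γ Γ₁ Γ₂ → WFStep R Γ₁ M → WFStep R Γ₂ N →
      WFStep R Γ (mk2 M N)
  | ll {Γ x M} : Γ x = none → WFStep R (Γ.upd x (some Pat.lin)) M →
      WFStep R Γ (mk1 (Shape.labs x) M)
  | li {Γ x M} : Γ x = none → WFStep R (Γ.upd x (some Pat.ind)) M →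
      WFStep R Γ (mk1 (Shape.iabs x) M)
  | lc {Γ x M} : Γ x = none → WFStep R (Γ.upd x (some Pat.coi)) M →
      WFStep R Γ (mk1 (Shape.cabs x) M)
  | mi {Γ M} : NoLin Γ → WFStep R Γ M → WFStep R Γ (mk1 Shape.ibox M)

/-- One application of the unique coinductive rule (mc). -/
def CoStep (S : Env → T → Prop) (Γ : Env) (M : T) : Prop :=
  NoLin Γ ∧ ∃ N, M = mk1 Shape.cbox N ∧ S Γ N

/-- Well-formation in ℓΛ∞: greatest fixed point of Ind ∘ Coind, presented via
consistent sets. -/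
def WF (Γ : Env) (M : T) : Prop :=
  ∃ S : Env → T → Prop, (∀ Δ N, S Δ N → WFStep (CoStep S) Δ N) ∧ S Γ M

/-! ### Infinitary reduction ⇒ and its auxiliary relation ⤳ -/

/-- One application of the coinductive ⇒-rule. `true` marks ⇒-judgments,
`false` marks ⤳-judgments. -/
def IRCo (S : Bool → T → T → Prop) (b : Bool) (M L : T) : Prop :=
  b = true ∧ ∃ N, Star M N ∧ S false N L

/-- The inductive ⤳-rules. -/
inductive IRInd (R : Bool → T → T → Prop) : Bool → T → T → Prop
  | base {b M N} : R b M N → IRInd R b M N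
  | varr (x) : IRInd R false (mk0 (Shape.var x)) (mk0 (Shape.var x))
  | app {M N P Q} : IRInd R false M N → IRInd R false P Q →
      IRInd R false (mk2 M P) (mk2 N Q)
  | labs {M N} (x) : IRInd R false M N →
      IRInd R false (mk1 (Shape.labs x) M) (mk1 (Shape.labs x) N)
  | iabs {M N} (x) : IRInd R false M N →
      IRInd R false (mk1 (Shape.iabs x) M) (mk1 (Shape.iabs x) N)
  | cabs {M N} (x) : IRInd R false M N →
      IRInd R false (mk1 (Shape.cabs x) M) (mk1 (Shape.cabs x) N)
  | ibox {M N} : IRInd R false M N →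
      IRInd R false (mk1 Shape.ibox M) (mk1 Shape.ibox N)
  | cbox {M N} : IRInd R true M N →
      IRInd R false (mk1 Shape.cbox M) (mk1 Shape.cbox N)

def IRSys (b : Bool) (M N : T) : Prop :=
  ∃ S : Bool → T → T → Prop,
    (∀ b' M' N', S b' M' N' → IRInd (IRCo S) b' M' N') ∧ S b M N

/-- Infinitary reduction M ⇒ N. -/
def Inf (M N : T) : Prop := IRSys true M N

/-- Auxiliary relation M ⤳ N. -/
def Next (M N : T) : Prop := IRSys false M N

def NormalForm (N : T) : Prop := ∀ s P, ¬ Red s N P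

end LLInf
namespace LLInf

/-! ### The infinitary λ-calculus Λ_{00a} and its Girard-style embedding -/

/-- Inductive rules for membership in Λ_{00a}: when `a = true` the argument
premise goes through the coinductive guard `S`. -/
inductive LamStep (a : Bool) (S : T → Prop) : T → Prop
  | var (x) : LamStep a S (mk0 (Shape.var x))
  | app0 {M N} : a = false → LamStep a S M → LamStep a S N → LamStep a S (mk2 M N)
  | app1 {M N} : a = true → LamStep a S M → S N → LamStep a S (mk2 M N)
  | lam {M} (x) : LamStep a S M → LamStep a S (mk1 (Shape.labs x) M)

/-- `M` is a term of Λ_{00a} (the depth increasing in argument position iff `a`). -/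
def Lam00 (a : Bool) (M : T) : Prop :=
  ∃ S : T → Prop, (∀ N, S N → LamStep a S N) ∧ S M

/-- The Girard-style embedding ⟨·⟩ₐ of Λ_{00a} into ℓΛ∞, positionally:
⟨x⟩ = x, ⟨MN⟩ = ⟨M⟩(◻ₐ⟨N⟩), ⟨λx.M⟩ = λ◻ₐx.⟨M⟩. -/
def embF (a : Bool) : T → List ℕ → Option Shape
  | M, [] =>
      match M [] with
      | some (Shape.var x) => some (Shape.var x)
      | some Shape.app => some Shape.app
      | some (Shape.labs x) => some (if a then Shape.cabs x else Shape.iabs x)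
      | _ => none
  | M, i :: q =>
      match M [] with
      | some Shape.app =>
          if i = 0 then embF a (child M 0) q
          else if i = 1 then
            match q with
            | [] => some (if a then Shape.cbox else Shape.ibox)
            | j :: r => if j = 0 then embF a (child M 1) r else none
          else none
      | some (Shape.labs _) => if i = 0 then embF a (child M 0) q else none
      | _ => none
termination_by M p => p.length
decreasing_by all_goals (simp [List.length_cons]; try omega)

def emb (a : Bool) (M : T) : T := fun p => embF a M p

/-- Reduction at depth `n` in Λ_{00a}: the depth increases only when entering
the second argument of an application, and only when `a = true`. -/
inductive LRed (a : Bool) : ℕ → T → T → Prop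
  | beta (x M N) : LRed a 0 (mk2 (mk1 (Shape.labs x) M) N) (subst x N M)
  | appL {n M N} (P) : LRed a n M N → LRed a n (mk2 M P) (mk2 N P)
  | lam {n M N} (x) : LRed a n M N →
      LRed a n (mk1 (Shape.labs x) M) (mk1 (Shape.labs x) N)
  | appR0 {n M N} (P) : a = false → LRed a n M N → LRed a n (mk2 P M) (mk2 P N)
  | appR1 {n M N} (P) : a = true → LRed a n M N → LRed a (n + 1) (mk2 P M) (mk2 P N)

/-- The environment ◻ₐ(FV(M)): every free variable of `M`, marked inductive
(a = false) or coinductive (a = true). -/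
noncomputable def envOf (a : Bool) (M : T) : Env := fun y =>
  @ite _ (Free y M) (Classical.dec _) (some (if a then Pat.coi else Pat.ind)) none

/-- The defining (guarded) equations of capture-avoiding substitution. -/
def SubstEqs (f : ℕ → T → T → T) : Prop :=
  ∀ x (N : T),
    f x N (mk0 (Shape.var x)) = N ∧
    (∀ y, y ≠ x → f x N (mk0 (Shape.var y)) = mk0 (Shape.var y)) ∧
    (∀ M P, f x N (mk2 M P) = mk2 (f x N M) (f x N P)) ∧
    (∀ y M, y ≠ x → f x N (mk1 (Shape.labs y) M) = mk1 (Shape.labs y) (f x N M)) ∧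
    (∀ M, f x N (mk1 (Shape.labs x) M) = mk1 (Shape.labs x) M) ∧
    (∀ y M, y ≠ x → f x N (mk1 (Shape.iabs y) M) = mk1 (Shape.iabs y) (f x N M)) ∧
    (∀ M, f x N (mk1 (Shape.iabs x) M) = mk1 (Shape.iabs x) M) ∧
    (∀ y M, y ≠ x → f x N (mk1 (Shape.cabs y) M) = mk1 (Shape.cabs y) (f x N M)) ∧
    (∀ M, f x N (mk1 (Shape.cabs x) M) = mk1 (Shape.cabs x) M) ∧
    (∀ M, f x N (mk1 Shape.ibox M) = mk1 Shape.ibox (f x N M)) ∧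
    (∀ M, f x N (mk1 Shape.cbox M) = mk1 Shape.cbox (f x N M))

end LLInf
namespace LLInf

/-! ### The calculus ℓΛ∞^{4S} -/

/-- Patterns of ℓΛ∞^{4S}: x, ↓x, !x, ↑x, #x. -/
inductive Pat4 where
  | lin | dm | im | cm | am
deriving DecidableEq

def Env4 : Type := ℕ → Option Pat4

def Env4.upd (Γ : Env4) (x : ℕ) (p : Option Pat4) : Env4 :=
  fun y => if y = x then p else Γ y

/-- Patterns shared between the premises of applications: ↓, ↑, #. -/
def Shared4 (p : Option Pat4) : Prop :=
  p = some Pat4.dm ∨ p = some Pat4.cm ∨ p = some Pat4.am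

/-- Environment containing only ↓, ↑, # patterns. -/
def Passive4 (Γ : Env4) : Prop := ∀ y, Γ y = none ∨ Shared4 (Γ y)

def Split4 (Γ Γ₁ Γ₂ : Env4) : Prop := ∀ y,
  (Shared4 (Γ y) ∧ Γ₁ y = Γ y ∧ Γ₂ y = Γ y) ∨
  (Γ y = none ∧ Γ₁ y = none ∧ Γ₂ y = none) ∨
  ((Γ y = some Pat4.lin ∨ Γ y = some Pat4.im) ∧
    ((Γ₁ y = Γ y ∧ Γ₂ y = none) ∨ (Γ₂ y = Γ y ∧ Γ₁ y = none)))

/-- Environment transformation of the (mi) rule: conclusion ↓Θ,!Ξ,↑Ψ,#Φ ⊢ !M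
from premise Ξ,↑Ψ,#Φ ⊢ M. -/
def MiEnv (Γ Γ' : Env4) : Prop := ∀ y,
  (Γ y = some Pat4.im ∧ Γ' y = some Pat4.lin) ∨
  (Γ y = some Pat4.cm ∧ Γ' y = some Pat4.cm) ∨
  (Γ y = some Pat4.am ∧ Γ' y = some Pat4.am) ∨
  (Γ y = some Pat4.dm ∧ Γ' y = none) ∨
  (Γ y = none ∧ Γ' y = none)

/-- Environment transformation of the coinductive (mc) rule: conclusion
↓Θ,↑Ξ,#Ψ ⊢ §M from premise #Ξ,#Ψ ⊢ M. -/
def McEnv (Γ Γ' : Env4) : Prop := ∀ y,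
  (Γ y = some Pat4.cm ∧ Γ' y = some Pat4.am) ∨
  (Γ y = some Pat4.am ∧ Γ' y = some Pat4.am) ∨
  (Γ y = some Pat4.dm ∧ Γ' y = none) ∨
  (Γ y = none ∧ Γ' y = none)

/-- The inductive well-formation rules of ℓΛ∞^{4S}. -/
inductive WF4Step (R : Env4 → T → Prop) : Env4 → T → Prop
  | base {Γ M} : R Γ M → WF4Step R Γ M
  | vl {Γ} (x) : Γ x = some Pat4.lin → Passive4 (Γ.upd x none) →
      WF4Step R Γ (mk0 (Shape.var x))
  | vd {Γ} (x) : Γ x = some Pat4.dm → Passive4 Γ → WF4Step R Γ (mk0 (Shape.var x))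
  | va {Γ} (x) : Γ x = some Pat4.am → Passive4 Γ → WF4Step R Γ (mk0 (Shape.var x))
  | app {Γ Γ₁ Γ₂ M N} : Split4 Γ Γ₁ Γ₂ → WF4Step R Γ₁ M → WF4Step R Γ₂ N →
      WF4Step R Γ (mk2 M N)
  | ll {Γ x M} : Γ x = none → WF4Step R (Γ.upd x (some Pat4.lin)) M →
      WF4Step R Γ (mk1 (Shape.labs x) M)
  | li1 {Γ x M} : Γ x = none → WF4Step R (Γ.upd x (some Pat4.dm)) M →
      WF4Step R Γ (mk1 (Shape.iabs x) M)
  | li2 {Γ x M} : Γ x = none → WF4Step R (Γ.upd x (some Pat4.im)) M →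
      WF4Step R Γ (mk1 (Shape.iabs x) M)
  | lc {Γ x M} : Γ x = none → WF4Step R (Γ.upd x (some Pat4.cm)) M →
      WF4Step R Γ (mk1 (Shape.cabs x) M)
  | mi {Γ Γ' M} : MiEnv Γ Γ' → WF4Step R Γ' M → WF4Step R Γ (mk1 Shape.ibox M)

/-- One application of the coinductive rule (mc) of ℓΛ∞^{4S}. -/
def CoStep4 (S : Env4 → T → Prop) (Γ : Env4) (M : T) : Prop :=
  ∃ Γ' N, McEnv Γ Γ' ∧ M = mk1 Shape.cbox N ∧ S Γ' N

/-- Well-formation in ℓΛ∞^{4S}. -/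
def WF4 (Γ : Env4) (M : T) : Prop :=
  ∃ S : Env4 → T → Prop, (∀ Δ N, S Δ N → WF4Step (CoStep4 S) Δ N) ∧ S Γ M

/-! ### Sizes, free occurrences, duplicability factors and weights -/

/-- The defining equations of the size |M|ₘ at depth m, as a relation. -/
inductive SizeRel : T → ℕ → ℕ → Prop
  | var0 (x) : SizeRel (mk0 (Shape.var x)) 0 1
  | ibox0 {M n} : SizeRel M 0 n → SizeRel (mk1 Shape.ibox M) 0 (n + 1)
  | cbox0 (M) : SizeRel (mk1 Shape.cbox M) 0 0
  | app0 {M N n p} : SizeRel M 0 n → SizeRel N 0 p →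
      SizeRel (mk2 M N) 0 (n + p + 1)
  | labs0 {M n} (x) : SizeRel M 0 n → SizeRel (mk1 (Shape.labs x) M) 0 (n + 1)
  | iabs0 {M n} (x) : SizeRel M 0 n → SizeRel (mk1 (Shape.iabs x) M) 0 (n + 1)
  | cabs0 {M n} (x) : SizeRel M 0 n → SizeRel (mk1 (Shape.cabs x) M) 0 (n + 1)
  | varS (x m) : SizeRel (mk0 (Shape.var x)) (m + 1) 0
  | iboxS {M m n} : SizeRel M (m + 1) n → SizeRel (mk1 Shape.ibox M) (m + 1) n
  | cboxS {M m n} : SizeRel M m n → SizeRel (mk1 Shape.cbox M) (m + 1) n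
  | appS {M N m n p} : SizeRel M (m + 1) n → SizeRel N (m + 1) p →
      SizeRel (mk2 M N) (m + 1) (n + p)
  | labsS {M m n} (x) : SizeRel M (m + 1) n → SizeRel (mk1 (Shape.labs x) M) (m + 1) n
  | iabsS {M m n} (x) : SizeRel M (m + 1) n → SizeRel (mk1 (Shape.iabs x) M) (m + 1) n
  | cabsS {M m n} (x) : SizeRel M (m + 1) n → SizeRel (mk1 (Shape.cabs x) M) (m + 1) n

/-- Number of free occurrences of `x`, as a relation. -/
inductive NFO (x : ℕ) : T → ℕ → Prop
  | varEq : NFO x (mk0 (Shape.var x)) 1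
  | varNe {y} : y ≠ x → NFO x (mk0 (Shape.var y)) 0
  | app {M N n p} : NFO x M n → NFO x N p → NFO x (mk2 M N) (n + p)
  | labsSh (M) : NFO x (mk1 (Shape.labs x) M) 0
  | labs {y M n} : y ≠ x → NFO x M n → NFO x (mk1 (Shape.labs y) M) n
  | iabsSh (M) : NFO x (mk1 (Shape.iabs x) M) 0
  | iabs {y M n} : y ≠ x → NFO x M n → NFO x (mk1 (Shape.iabs y) M) n
  | cabsSh (M) : NFO x (mk1 (Shape.cabs x) M) 0
  | cabs {y M n} : y ≠ x → NFO x M n → NFO x (mk1 (Shape.cabs y) M) n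
  | ibox {M n} : NFO x M n → NFO x (mk1 Shape.ibox M) n
  | cbox {M n} : NFO x M n → NFO x (mk1 Shape.cbox M) n
  | cboxNot {M} : ¬ Free x M → NFO x (mk1 Shape.cbox M) 0

/-- The defining equations of the duplicability factor Dₘ(M), as a relation. -/
inductive DRel : T → ℕ → ℕ → Prop
  | var0 (x) : DRel (mk0 (Shape.var x)) 0 1
  | ibox0 {M d} : DRel M 0 d → DRel (mk1 Shape.ibox M) 0 d
  | cbox0 (M) : DRel (mk1 Shape.cbox M) 0 1
  | app0 {M N d e} : DRel M 0 d → DRel N 0 e → DRel (mk2 M N) 0 (max d e)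
  | labs0 {M d} (x) : DRel M 0 d → DRel (mk1 (Shape.labs x) M) 0 d
  | cabs0 {M d} (x) : DRel M 0 d → DRel (mk1 (Shape.cabs x) M) 0 d
  | iabs0 {x M k d} : NFO x M k → DRel M 0 d →
      DRel (mk1 (Shape.iabs x) M) 0 (max k d)
  | varS (x m) : DRel (mk0 (Shape.var x)) (m + 1) 1
  | iboxS {M m d} : DRel M (m + 1) d → DRel (mk1 Shape.ibox M) (m + 1) d
  | cboxS {M m d} : DRel M m d → DRel (mk1 Shape.cbox M) (m + 1) d
  | appS {M N m d e} : DRel M (m + 1) d → DRel N (m + 1) e →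
      DRel (mk2 M N) (m + 1) (max d e)
  | labsS {M m d} (x) : DRel M (m + 1) d → DRel (mk1 (Shape.labs x) M) (m + 1) d
  | iabsS {M m d} (x) : DRel M (m + 1) d → DRel (mk1 (Shape.iabs x) M) (m + 1) d
  | cabsS {M m d} (x) : DRel M (m + 1) d → DRel (mk1 (Shape.cabs x) M) (m + 1) d

/-- The defining equations of the n-weight wⁿₘ(M), as a relation. -/
inductive WRel (n : ℕ) : T → ℕ → ℕ → Prop
  | var0 (x) : WRel n (mk0 (Shape.var x)) 0 1
  | ibox0 {M w} : WRel n M 0 w → WRel n (mk1 Shape.ibox M) 0 (n * w)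
  | cbox0 (M) : WRel n (mk1 Shape.cbox M) 0 0
  | app0 {M N w v} : WRel n M 0 w → WRel n N 0 v → WRel n (mk2 M N) 0 (w + v)
  | labs0 {M w} (x) : WRel n M 0 w → WRel n (mk1 (Shape.labs x) M) 0 (w + 1)
  | iabs0 {M w} (x) : WRel n M 0 w → WRel n (mk1 (Shape.iabs x) M) 0 (w + 1)
  | cabs0 {M w} (x) : WRel n M 0 w → WRel n (mk1 (Shape.cabs x) M) 0 (w + 1)
  | varS (x m) : WRel n (mk0 (Shape.var x)) (m + 1) 0
  | iboxS {M m w} : WRel n M (m + 1) w → WRel n (mk1 Shape.ibox M) (m + 1) w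
  | cboxS {M m w} : WRel n M m w → WRel n (mk1 Shape.cbox M) (m + 1) w
  | appS {M N m w v} : WRel n M (m + 1) w → WRel n N (m + 1) v →
      WRel n (mk2 M N) (m + 1) (w + v)
  | labsS {M m w} (x) : WRel n M (m + 1) w → WRel n (mk1 (Shape.labs x) M) (m + 1) w
  | iabsS {M m w} (x) : WRel n M (m + 1) w → WRel n (mk1 (Shape.iabs x) M) (m + 1) w
  | cabsS {M m w} (x) : WRel n M (m + 1) w → WRel n (mk1 (Shape.cabs x) M) (m + 1) w

/-- Wₘ(M) = w^{Dₘ(M)}ₘ(M): the weight of `M` at depth `m`. -/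
def TW (M : T) (m w : ℕ) : Prop := ∃ d, DRel M m d ∧ WRel d M m w

end LLInf

/-!
We argue by induction on the depth-0 step `N → L`. Outside coinductive boxes `⤳` is
structural, so inverting `M ⤳ N` along the path to the contracted redex yields a redex of `M`
of the same kind, `(λx.M₁)M₂` with `M₁ ⤳ N₁`, and everything reduces to the substitutivity of
`⤳`: `M₁[M₂/x] ⤳ N₁[N₂/x]`.

Inside a box `⤳` becomes `⇒`, that is `→*` followed by `⤳`, so substitutivity is proved
coinductively, and the substitution must commute with these reductions: no variable may be
captured. For a coinductive redex `(λ↑x.M₁)(§M₂)` we only know `M₂ →* K ⤳ N₂`. Within a box of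
`M₁`, once its content has reduced to some `K₁ ⤳ B₁`, the copies of `M₂` standing outside the
boxes of `K₁` are advanced to `K` (finitely many, `⤳` being inductive there), and the
coinduction continues with `K` at those positions (`msubst`). Well-formation makes this work:
a variable `↑x` occurs only inside boxes, the variables `x`, `↓x`, `!x` only outside, and the
free variables of a box are `#`-variables, which are never rebound.
-/

namespace LLInf

def bot : T := fun _ => none

@[simp] lemma bot_apply (p : List ℕ) : bot p = none := rfl

@[simp] lemma mk0_nil (s : Shape) : mk0 s [] = some s := rfl
@[simp] lemma mk1_nil (s : Shape) (M : T) : mk1 s M [] = some s := rfl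
@[simp] lemma mk2_nil (M N : T) : mk2 M N [] = some Shape.app := rfl
@[simp] lemma mk2_zero_cons (M N : T) (q : List ℕ) : mk2 M N (0 :: q) = M q := rfl

@[simp] lemma child_bot (i : ℕ) : child bot i = bot := rfl
@[simp] lemma child_mk0 (s : Shape) (i : ℕ) : child (mk0 s) i = bot := by
  funext p; simp [child, mk0]
@[simp] lemma child_mk1_succ (s : Shape) (M : T) (i : ℕ) : child (mk1 s M) (i + 1) = bot := rfl
@[simp] lemma child_mk2_add_two (M N : T) (i : ℕ) : child (mk2 M N) (i + 2) = bot := rfl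

lemma mk1_inj {s s' : Shape} {M M' : T} (h : mk1 s M = mk1 s' M') : s = s' ∧ M = M' :=
  ⟨by simpa using congrFun h [], congrArg (child · 0) h⟩

lemma mk2_inj {M N M' N' : T} (h : mk2 M N = mk2 M' N') : M = M' ∧ N = N' :=
  ⟨congrArg (child · 0) h, congrArg (child · 1) h⟩

lemma ext_child {M N : T} (h₀ : M [] = N []) (h : ∀ i, child M i = child N i) : M = N := by
  funext p
  cases p with
  | nil => exact h₀
  | cons i q => exact congrFun (h i) q

lemma eq_of_bisim (R : T → T → Prop)
    (step : ∀ M N, R M N → M = N ∨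
      M [] = N [] ∧ ∀ i, child M i = child N i ∨ R (child M i) (child N i))
    {M N : T} (h : R M N) : M = N := by
  funext p
  induction p generalizing M N with
  | nil => rcases step M N h with rfl | ⟨h₀, -⟩ <;> trivial
  | cons i q ih =>
      rcases step M N h with rfl | ⟨-, hc⟩
      · rfl
      · rcases hc i with hi | hi
        · exact congrFun hi q
        · exact ih hi

/-! ### Substitution -/

section Subst

variable {x : ℕ} {N M A B : T}

lemma ne_var_of_bindsX {o : Option Shape} (h : bindsX x o = true) (z : ℕ) :
    o ≠ some (Shape.var z) := by
  rintro rfl; simp [bindsX] at h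

lemma subst_of_root_var (h : M [] = some (Shape.var x)) : subst x N M = N := by
  funext p; cases p <;> simp [subst, substF, h]

lemma subst_nil (h : M [] ≠ some (Shape.var x)) : subst x N M [] = M [] := by
  simp [subst, substF, h]

lemma subst_of_bindsX (h : bindsX x (M []) = true) : subst x N M = M := by
  funext p; cases p <;> simp [subst, substF, h, ne_var_of_bindsX h]

lemma child_subst (h₁ : M [] ≠ some (Shape.var x)) (h₂ : bindsX x (M []) = false) (i : ℕ) :
    child (subst x N M) i = subst x N (child M i) := by
  funext q; simp [child, subst, substF, h₁, h₂]

@[simp] lemma subst_bot : subst x N bot = bot := by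
  funext p
  induction p with
  | nil => simp [subst, substF]
  | cons i q ih => exact (congrFun (child_subst (by simp) rfl i) q).trans ih

lemma subst_mk2 : subst x N (mk2 A B) = mk2 (subst x N A) (subst x N B) := by
  refine ext_child (subst_nil (by simp)) fun i => ?_
  rw [child_subst (by simp) rfl]
  match i with
  | 0 | 1 => rfl
  | _ + 2 => exact subst_bot

lemma subst_mk1 {s : Shape} (hs : ∀ z, s ≠ Shape.var z) :
    subst x N (mk1 s A) = mk1 s (if bindsX x (some s) then A else subst x N A) := by
  split_ifs with hb
  · exact subst_of_bindsX hb
  refine ext_child (subst_nil (by simpa using hs x)) fun i => ?_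
  rw [child_subst (by simpa using hs x) (by simpa using hb)]
  match i with
  | 0 => rfl
  | _ + 1 => exact subst_bot

lemma subst_mk1_of_not_bindsX {s : Shape} (hs : ∀ z, s ≠ Shape.var z)
    (hb : bindsX x (some s) = false) : subst x N (mk1 s A) = mk1 s (subst x N A) := by
  rw [subst_mk1 hs, if_neg (by simpa using hb)]

lemma subst_mk0_of_ne {y : ℕ} (h : y ≠ x) : subst x N (mk0 (Shape.var y)) = mk0 (Shape.var y) :=
  ext_child (subst_nil (by simpa using h)) fun i => by
    rw [child_subst (by simpa using h) rfl]; simp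

end Subst

def msubstF (x : ℕ) (C' C : T) : T → List ℕ → Option Shape
  | M, [] => if M [] = some (Shape.var x) then C' [] else M []
  | M, i :: q =>
      if M [] = some (Shape.var x) then C' (i :: q)
      else if bindsX x (M []) then M (i :: q)
      else if M [] = some Shape.cbox then substF x C (child M i) q
      else msubstF x C' C (child M i) q
termination_by _ p => p.length

/-- `msubst x C' C M` substitutes `C'` for the free occurrences of `x` outside all
coinductive boxes and `C` for those inside. -/
def msubst (x : ℕ) (C' C M : T) : T := fun p => msubstF x C' C M p

section MSubst

variable {x : ℕ} {C' C M A B : T}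

lemma msubst_of_root_var (h : M [] = some (Shape.var x)) : msubst x C' C M = C' := by
  funext p; cases p <;> simp [msubst, msubstF, h]

lemma msubst_nil (h : M [] ≠ some (Shape.var x)) : msubst x C' C M [] = M [] := by
  simp [msubst, msubstF, h]

lemma msubst_of_bindsX (h : bindsX x (M []) = true) : msubst x C' C M = M := by
  funext p; cases p <;> simp [msubst, msubstF, h, ne_var_of_bindsX h]

lemma child_msubst (h₁ : M [] ≠ some (Shape.var x)) (h₂ : bindsX x (M []) = false)
    (h₃ : M [] ≠ some Shape.cbox) (i : ℕ) :
    child (msubst x C' C M) i = msubst x C' C (child M i) := by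
  funext q; simp [child, msubst, msubstF, h₁, h₂, h₃]

lemma child_msubst_of_cbox (h : M [] = some Shape.cbox) (i : ℕ) :
    child (msubst x C' C M) i = subst x C (child M i) := by
  funext q; simp [child, msubst, msubstF, subst, h, bindsX]

@[simp] lemma msubst_bot : msubst x C' C bot = bot := by
  funext p
  induction p with
  | nil => simp [msubst, msubstF]
  | cons i q ih => exact (congrFun (child_msubst (by simp) rfl (by simp) i) q).trans ih

lemma msubst_mk2 : msubst x C' C (mk2 A B) = mk2 (msubst x C' C A) (msubst x C' C B) := by
  refine ext_child (msubst_nil (by simp)) fun i => ?_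
  rw [child_msubst (by simp) rfl (by simp)]
  match i with
  | 0 | 1 => rfl
  | _ + 2 => exact msubst_bot

lemma msubst_mk1 {s : Shape} (hs : ∀ z, s ≠ Shape.var z) (hc : s ≠ Shape.cbox) :
    msubst x C' C (mk1 s A) = mk1 s (if bindsX x (some s) then A else msubst x C' C A) := by
  split_ifs with hb
  · exact msubst_of_bindsX hb
  refine ext_child (msubst_nil (by simpa using hs x)) fun i => ?_
  rw [child_msubst (by simpa using hs x) (by simpa using hb) (by simpa using hc)]
  match i with
  | 0 => rfl
  | _ + 1 => exact msubst_bot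

lemma msubst_cbox : msubst x C' C (mk1 Shape.cbox A) = mk1 Shape.cbox (subst x C A) :=
  ext_child (msubst_nil (by simp)) fun i => by
    rw [child_msubst_of_cbox rfl]
    match i with
    | 0 => rfl
    | _ + 1 => exact subst_bot

lemma msubst_mk0_of_ne {y : ℕ} (h : y ≠ x) :
    msubst x C' C (mk0 (Shape.var y)) = mk0 (Shape.var y) :=
  ext_child (msubst_nil (by simpa using h)) fun i => by
    rw [child_msubst (by simpa using h) rfl (by simp)]; simp

end MSubst

def BoundIn (y : ℕ) (A : T) : Prop := ∃ p, bindsX y (A p) = true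

def CrossesBox (A : T) (p : List ℕ) : Prop :=
  ∃ p₁ i p₂, p = p₁ ++ i :: p₂ ∧ A p₁ = some Shape.cbox

section Occurrences

variable {x y : ℕ} {M N A B : T} {s : Shape}

@[simp] lemma freeAt_nil : FreeAt y M [] ↔ M [] = some (Shape.var y) := by
  simp [FreeAt]

@[simp] lemma freeAt_cons {i : ℕ} {q : List ℕ} :
    FreeAt y M (i :: q) ↔ bindsX y (M []) = false ∧ FreeAt y (child M i) q := by
  simp [FreeAt]

@[simp] lemma not_freeAt_bot {p : List ℕ} : ¬ FreeAt y bot p := by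
  induction p <;> simp_all [bindsX]

lemma free_of_free_child {i : ℕ} (hb : bindsX y (M []) = false) (h : Free y (child M i)) :
    Free y M :=
  let ⟨q, hq⟩ := h; ⟨i :: q, freeAt_cons.2 ⟨hb, hq⟩⟩

lemma crossesBox_cons {i : ℕ} {q : List ℕ} :
    CrossesBox A (i :: q) ↔ A [] = some Shape.cbox ∨ CrossesBox (child A i) q := by
  constructor
  · rintro ⟨_ | ⟨j, p₁⟩, k, p₂, he, hc⟩
    · exact .inl hc
    · simp only [List.cons_append, List.cons.injEq] at he
      obtain ⟨rfl, rfl⟩ := he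
      exact .inr ⟨p₁, k, p₂, rfl, hc⟩
  · rintro (hc | ⟨p₁, j, p₂, rfl, hc⟩)
    · exact ⟨[], i, q, rfl, hc⟩
    · exact ⟨i :: p₁, j, p₂, rfl, hc⟩

lemma free_mk1 (hs : ∀ z, s ≠ Shape.var z) :
    Free y (mk1 s A) ↔ bindsX y (some s) = false ∧ Free y A := by
  constructor
  · rintro ⟨_ | ⟨_ | i, q⟩, hp⟩
    · exact absurd (by simpa using hp) (hs y)
    · exact ⟨(freeAt_cons.1 hp).1, q, (freeAt_cons.1 hp).2⟩
    · simp at hp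
  · rintro ⟨h, p, hp⟩; exact ⟨0 :: p, freeAt_cons.2 ⟨h, hp⟩⟩

lemma free_mk2 : Free y (mk2 A B) ↔ Free y A ∨ Free y B := by
  constructor
  · rintro ⟨_ | ⟨_ | _ | i, q⟩, hp⟩
    · simp at hp
    · exact .inl ⟨q, (freeAt_cons.1 hp).2⟩
    · exact .inr ⟨q, (freeAt_cons.1 hp).2⟩
    · simp at hp
  · rintro (⟨p, hp⟩ | ⟨p, hp⟩)
    · exact ⟨0 :: p, freeAt_cons.2 ⟨rfl, hp⟩⟩
    · exact ⟨1 :: p, freeAt_cons.2 ⟨rfl, hp⟩⟩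

lemma boundIn_mk1 : BoundIn y (mk1 s A) ↔ bindsX y (some s) = true ∨ BoundIn y A := by
  constructor
  · rintro ⟨_ | ⟨_ | i, q⟩, hp⟩
    · exact .inl hp
    · exact .inr ⟨q, hp⟩
    · simp [mk1, bindsX] at hp
  · rintro (h | ⟨p, hp⟩)
    · exact ⟨[], h⟩
    · exact ⟨0 :: p, hp⟩

lemma boundIn_mk2 : BoundIn y (mk2 A B) ↔ BoundIn y A ∨ BoundIn y B := by
  constructor
  · rintro ⟨_ | ⟨_ | _ | i, q⟩, hp⟩
    · simp [bindsX] at hp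
    · exact .inl ⟨q, hp⟩
    · exact .inr ⟨q, hp⟩
    · simp [mk2, bindsX] at hp
  · rintro (⟨p, hp⟩ | ⟨p, hp⟩)
    · exact ⟨0 :: p, hp⟩
    · exact ⟨1 :: p, hp⟩

lemma subst_apply_mem (p : List ℕ) : (∃ q, subst x N M p = N q) ∨ subst x N M p = M p := by
  induction p generalizing M with
  | nil =>
      by_cases h : M [] = some (Shape.var x)
      · exact .inl ⟨[], by rw [subst_of_root_var h]⟩
      · exact .inr (subst_nil h)
  | cons i q ih =>
      by_cases h₁ : M [] = some (Shape.var x)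
      · exact .inl ⟨i :: q, by rw [subst_of_root_var h₁]⟩
      cases h₂ : bindsX x (M [])
      · show (∃ r, child (subst x N M) i q = N r) ∨ child (subst x N M) i q = child M i q
        rw [child_subst h₁ h₂]; exact ih
      · exact .inr (by rw [subst_of_bindsX h₂])

lemma boundIn_subst (h : BoundIn y (subst x N M)) : BoundIn y N ∨ BoundIn y M := by
  obtain ⟨p, hp⟩ := h
  rcases subst_apply_mem (x := x) (N := N) (M := M) p with ⟨q, hq⟩ | hq
  · exact .inl ⟨q, hq ▸ hp⟩
  · exact .inr ⟨p, hq ▸ hp⟩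

lemma free_subst (h : Free y (subst x N M)) : Free y N ∨ y ≠ x ∧ Free y M := by
  obtain ⟨p, hp⟩ := h
  induction p generalizing M with
  | nil =>
      by_cases h₁ : M [] = some (Shape.var x)
      · exact .inl ⟨[], by rwa [subst_of_root_var h₁] at hp⟩
      · rw [freeAt_nil, subst_nil h₁] at hp
        exact .inr ⟨by rintro rfl; exact h₁ hp, [], freeAt_nil.2 hp⟩
  | cons i q ih =>
      by_cases h₁ : M [] = some (Shape.var x)
      · exact .inl ⟨i :: q, by rwa [subst_of_root_var h₁] at hp⟩
      cases h₂ : bindsX x (M [])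
      · rw [freeAt_cons, subst_nil h₁, child_subst h₁ h₂] at hp
        exact (ih hp.2).imp_right fun ⟨hyx, hy⟩ => ⟨hyx, free_of_free_child hp.1 hy⟩
      · rw [subst_of_bindsX h₂] at hp
        refine .inr ⟨?_, _, hp⟩
        rintro rfl; simp [(freeAt_cons.1 hp).1] at h₂

end Occurrences

def FreeOnlyInBoxes (x : ℕ) (A : T) : Prop := ∀ p, FreeAt x A p → CrossesBox A p

section SubstLemmas

variable {x y : ℕ} {C C' N Q M A : T}

lemma subst_of_not_free (h : ¬ Free x M) : subst x N M = M := by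
  refine eq_of_bisim (fun P M => ¬ Free x M ∧ P = subst x N M) ?_ ⟨h, rfl⟩
  rintro _ M ⟨h, rfl⟩
  have h₁ : M [] ≠ some (Shape.var x) := fun h₁ => h ⟨[], freeAt_nil.2 h₁⟩
  cases h₂ : bindsX x (M [])
  · refine .inr ⟨subst_nil h₁, fun i => .inr ⟨?_, child_subst h₁ h₂ i⟩⟩
    exact fun hc => h (free_of_free_child h₂ hc)
  · exact .inl (subst_of_bindsX h₂)

lemma msubst_of_not_free (h : ¬ Free x M) : msubst x C' C M = M := by
  refine eq_of_bisim (fun P M => ¬ Free x M ∧ P = msubst x C' C M) ?_ ⟨h, rfl⟩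
  rintro _ M ⟨h, rfl⟩
  have h₁ : M [] ≠ some (Shape.var x) := fun h₁ => h ⟨[], freeAt_nil.2 h₁⟩
  cases h₂ : bindsX x (M [])
  · have hc : ∀ i, ¬ Free x (child M i) := fun i hc => h (free_of_free_child h₂ hc)
    refine .inr ⟨msubst_nil h₁, fun i => ?_⟩
    by_cases h₃ : M [] = some Shape.cbox
    · exact .inl (by rw [child_msubst_of_cbox h₃, subst_of_not_free (hc i)])
    · exact .inr ⟨hc i, child_msubst h₁ h₂ h₃ i⟩
  · exact .inl (msubst_of_bindsX h₂)

lemma msubst_self : msubst x C C M = subst x C M := by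
  refine eq_of_bisim (fun P Q => ∃ M, P = msubst x C C M ∧ Q = subst x C M) ?_ ⟨M, rfl, rfl⟩
  rintro _ _ ⟨M, rfl, rfl⟩
  by_cases h₁ : M [] = some (Shape.var x)
  · exact .inl (by rw [msubst_of_root_var h₁, subst_of_root_var h₁])
  cases h₂ : bindsX x (M [])
  · refine .inr ⟨by rw [msubst_nil h₁, subst_nil h₁], fun i => ?_⟩
    rw [child_subst h₁ h₂]
    by_cases h₃ : M [] = some Shape.cbox
    · exact .inl (child_msubst_of_cbox h₃ i)
    · exact .inr ⟨child M i, child_msubst h₁ h₂ h₃ i, rfl⟩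
  · exact .inl (by rw [msubst_of_bindsX h₂, subst_of_bindsX h₂])

lemma msubst_of_freeOnlyInBoxes (h : FreeOnlyInBoxes x M) : msubst x C' C M = subst x C M := by
  refine eq_of_bisim (fun P Q => ∃ M, FreeOnlyInBoxes x M ∧ P = msubst x C' C M ∧
    Q = subst x C M) ?_ ⟨M, h, rfl, rfl⟩
  rintro _ _ ⟨M, h, rfl, rfl⟩
  have h₁ : M [] ≠ some (Shape.var x) := by
    intro h₁
    obtain ⟨_, _, _, he, -⟩ := h [] (freeAt_nil.2 h₁)
    simp at he
  cases h₂ : bindsX x (M [])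
  · refine .inr ⟨by rw [msubst_nil h₁, subst_nil h₁], fun i => ?_⟩
    rw [child_subst h₁ h₂]
    by_cases h₃ : M [] = some Shape.cbox
    · exact .inl (child_msubst_of_cbox h₃ i)
    refine .inr ⟨child M i, fun q hq => ?_, child_msubst h₁ h₂ h₃ i, rfl⟩
    exact (crossesBox_cons.1 (h (i :: q) (freeAt_cons.2 ⟨h₂, hq⟩))).resolve_left h₃
  · exact .inl (by rw [msubst_of_bindsX h₂, subst_of_bindsX h₂])

lemma subst_subst (hyx : y ≠ x) (hC : ¬ Free y C) (hA : ∀ p, bindsX x (A p) = false) :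
    subst x C (subst y Q A) = subst y (subst x C Q) (subst x C A) := by
  refine eq_of_bisim (fun P P' => ∃ A, (∀ p, bindsX x (A p) = false) ∧
    P = subst x C (subst y Q A) ∧ P' = subst y (subst x C Q) (subst x C A)) ?_ ⟨A, hA, rfl, rfl⟩
  rintro _ _ ⟨A, hA, rfl, rfl⟩
  by_cases hy : A [] = some (Shape.var y)
  · left
    rw [subst_of_root_var hy, subst_of_root_var (M := subst x C A)]
    rwa [subst_nil (by rw [hy]; simpa using hyx)]
  by_cases hx : A [] = some (Shape.var x)
  · left
    rw [subst_of_root_var hx, subst_of_not_free hC, subst_of_root_var]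
    rwa [subst_nil hy]
  have e₁ : subst y Q A [] = A [] := subst_nil hy
  have e₂ : subst x C A [] = A [] := subst_nil hx
  have hx' : subst y Q A [] ≠ some (Shape.var x) := by rwa [e₁]
  have hy' : subst x C A [] ≠ some (Shape.var y) := by rwa [e₂]
  cases hb : bindsX y (A [])
  · refine .inr ⟨by rw [subst_nil hx', subst_nil hy', e₁, e₂], fun i => .inr ?_⟩
    refine ⟨child A i, fun p => hA (i :: p), ?_, ?_⟩
    · rw [child_subst hx' (by rw [e₁]; exact hA []), child_subst hy hb]
    · rw [child_subst hy' (by rwa [e₂]), child_subst hx (hA [])]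
  · left
    rw [subst_of_bindsX hb, subst_of_bindsX (M := subst x C A) (by rwa [e₂])]

end SubstLemmas

/-! ### Reduction and substitution -/

def CaptureFree (x : ℕ) (C A : T) : Prop := ∀ y, BoundIn y A → ¬ Free y C ∧ y ≠ x

section Reduction

variable {x : ℕ} {C A A' B : T} {s : List Bool}

lemma CaptureFree.mono (h : CaptureFree x C A) (hB : ∀ y, BoundIn y B → BoundIn y A) :
    CaptureFree x C B :=
  fun y hy => h y (hB y hy)

lemma CaptureFree.not_bindsX (h : CaptureFree x C A) (p : List ℕ) : bindsX x (A p) = false :=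
  Bool.eq_false_iff.2 fun hb => (h x ⟨p, hb⟩).2 rfl

lemma basic_boundIn {y : ℕ} (h : Basic A A') (hy : BoundIn y A') : BoundIn y A := by
  cases h <;> rcases boundIn_subst hy with h | h <;> simp [boundIn_mk2, boundIn_mk1, h]

lemma basic_free {y : ℕ} (h : Basic A A') (hy : Free y A') : Free y A := by
  cases h <;> rcases free_subst hy with h | ⟨hyx, h⟩ <;>
    simp [free_mk2, free_mk1, bindsX, Ne.symm, *]

lemma red_boundIn {y : ℕ} (h : Red s A A') (hy : BoundIn y A') : BoundIn y A := by
  induction h with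
  | base h => exact basic_boundIn h hy
  | appL _ _ ih => exact boundIn_mk2.2 ((boundIn_mk2.1 hy).imp_left ih)
  | appR _ _ ih => exact boundIn_mk2.2 ((boundIn_mk2.1 hy).imp_right ih)
  | labs _ _ ih | iabs _ _ ih | cabs _ _ ih | ibox _ ih | cbox _ ih =>
      exact boundIn_mk1.2 ((boundIn_mk1.1 hy).imp_right ih)

lemma red_free {y : ℕ} (h : Red s A A') (hy : Free y A') : Free y A := by
  induction h with
  | base h => exact basic_free h hy
  | appL _ _ ih => exact free_mk2.2 ((free_mk2.1 hy).imp_left ih)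
  | appR _ _ ih => exact free_mk2.2 ((free_mk2.1 hy).imp_right ih)
  | labs _ _ ih | iabs _ _ ih | cabs _ _ ih | ibox _ ih | cbox _ ih =>
      exact (free_mk1 (by simp)).2 (((free_mk1 (by simp)).1 hy).imp_right ih)

lemma star_boundIn {y : ℕ} (h : Star A A') (hy : BoundIn y A') : BoundIn y A := by
  induction h using Relation.ReflTransGen.head_induction_on with
  | refl => exact hy
  | head hstep _ ih => exact red_boundIn hstep.choose_spec ih

lemma star_free {y : ℕ} (h : Star A A') (hy : Free y A') : Free y A := by
  induction h using Relation.ReflTransGen.head_induction_on with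
  | refl => exact hy
  | head hstep _ ih => exact red_free hstep.choose_spec ih

lemma basic_subst (h : Basic A A') (hA : CaptureFree x C A) :
    Basic (subst x C A) (subst x C A') := by
  cases h with
  | lin z B Q | ind z B Q | coi z B Q =>
      obtain ⟨hzC, hzx⟩ := hA z ⟨[0], by simp [bindsX]⟩
      have hB : ∀ p, bindsX x (B p) = false := fun p => hA.not_bindsX (0 :: 0 :: p)
      rw [subst_subst hzx hzC hB, subst_mk2,
        subst_mk1_of_not_bindsX (by simp) (by simp [bindsX, hzx])]
      try rw [subst_mk1_of_not_bindsX (by simp) rfl]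
      constructor

lemma red_subst (h : Red s A A') (hA : CaptureFree x C A) :
    Red s (subst x C A) (subst x C A') := by
  induction h with
  | base h => exact .base (basic_subst h hA)
  | appL _ _ ih =>
      rw [subst_mk2, subst_mk2]
      exact .appL _ (ih (hA.mono fun _ hy => boundIn_mk2.2 (.inl hy)))
  | appR _ _ ih =>
      rw [subst_mk2, subst_mk2]
      exact .appR _ (ih (hA.mono fun _ hy => boundIn_mk2.2 (.inr hy)))
  | labs _ _ ih | iabs _ _ ih | cabs _ _ ih | ibox _ ih | cbox _ ih =>
      rw [subst_mk1_of_not_bindsX (by simp) (hA.not_bindsX []),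
        subst_mk1_of_not_bindsX (by simp) (hA.not_bindsX [])]
      constructor
      exact ih (hA.mono fun _ hy => boundIn_mk1.2 (.inr hy))

lemma star_subst (h : Star A A') (hA : CaptureFree x C A) :
    Star (subst x C A) (subst x C A') := by
  induction h using Relation.ReflTransGen.head_induction_on with
  | refl => exact .refl
  | head hstep _ ih =>
      obtain ⟨s, hs⟩ := hstep
      exact .head ⟨s, red_subst hs hA⟩ (ih (hA.mono fun _ => red_boundIn hs))

lemma star_mk2 {A' B B' : T} (hA : Star A A') (hB : Star B B') : Star (mk2 A B) (mk2 A' B') :=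
  (hA.lift (mk2 · B) fun _ _ ⟨s, h⟩ => ⟨s, .appL B h⟩).trans
    (hB.lift (mk2 A') fun _ _ ⟨s, h⟩ => ⟨s, .appR A' h⟩)

lemma red'_mk1 {sh : Shape} (hsh : arity sh = 1) (h : Red' A B) : Red' (mk1 sh A) (mk1 sh B) := by
  obtain ⟨s, h⟩ := h
  cases sh with
  | var | app => simp [arity] at hsh
  | labs z => exact ⟨s, .labs z h⟩
  | iabs z => exact ⟨s, .iabs z h⟩
  | cabs z => exact ⟨s, .cabs z h⟩
  | ibox => exact ⟨_, .ibox h⟩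
  | cbox => exact ⟨_, .cbox h⟩

lemma star_mk1 {sh : Shape} (hsh : arity sh = 1) (h : Star A B) : Star (mk1 sh A) (mk1 sh B) :=
  h.lift (mk1 sh) fun _ _ => red'_mk1 hsh

end Reduction

/-! ### Substitutivity of `⤳` -/

section Infinitary

variable {R R' S S' : Bool → T → T → Prop} {b : Bool} {M N A B : T}

lemma IRInd.mono (hR : ∀ b M N, R b M N → R' b M N) (h : IRInd R b M N) : IRInd R' b M N := by
  induction h with
  | base h => exact .base (hR _ _ _ h)
  | varr z => exact .varr z
  | app _ _ ih₁ ih₂ => exact .app ih₁ ih₂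
  | labs z _ ih => exact .labs z ih
  | iabs z _ ih => exact .iabs z ih
  | cabs z _ ih => exact .cabs z ih
  | ibox _ ih => exact .ibox ih
  | cbox _ ih => exact .cbox ih

lemma IRInd.of_true (h : IRInd R true M N) : R true M N := by
  cases h with
  | base h => exact h

lemma IRCo.mono (hS : ∀ M N, S false M N → S' false M N) : ∀ b M N, IRCo S b M N → IRCo S' b M N :=
  fun _ _ _ ⟨hb, K, hK, hKN⟩ => ⟨hb, K, hK, hS _ _ hKN⟩

lemma IRSys.unfold (h : IRSys b M N) : IRInd (IRCo IRSys) b M N :=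
  let ⟨S, hS, h⟩ := h
  (hS _ _ _ h).mono (IRCo.mono fun _ _ h => ⟨S, hS, h⟩)

lemma irSys_iff : IRSys b M N ↔ IRInd (IRCo IRSys) b M N :=
  ⟨IRSys.unfold, fun h => ⟨fun b M N => IRInd (IRCo IRSys) b M N,
    fun _ _ _ h => h.mono (IRCo.mono fun _ _ => IRSys.unfold), h⟩⟩

lemma IRInd.mk1 {sh : Shape} (hsh : arity sh = 1) (hc : sh ≠ Shape.cbox) (h : IRInd R false A B) :
    IRInd R false (mk1 sh A) (mk1 sh B) := by
  cases sh with
  | var | app => simp [arity] at hsh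
  | labs z => exact .labs z h
  | iabs z => exact .iabs z h
  | cabs z => exact .cabs z h
  | ibox => exact .ibox h
  | cbox => exact absurd rfl hc

lemma next_mk2 {A' B' : T} (hA : Next A A') (hB : Next B B') : Next (mk2 A B) (mk2 A' B') :=
  irSys_iff.2 (.app (irSys_iff.1 hA) (irSys_iff.1 hB))

lemma next_mk1 {sh : Shape} (hsh : arity sh = 1) (hc : sh ≠ Shape.cbox) (h : Next A B) :
    Next (mk1 sh A) (mk1 sh B) :=
  irSys_iff.2 ((irSys_iff.1 h).mk1 hsh hc)

lemma next_inv_mk2 {N₁ N₂ : T} (h : Next M (mk2 N₁ N₂)) :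
    ∃ M₁ M₂, M = mk2 M₁ M₂ ∧ Next M₁ N₁ ∧ Next M₂ N₂ := by
  generalize hE : mk2 N₁ N₂ = E at h
  cases irSys_iff.1 h with
  | base h' => exact absurd h'.1 Bool.false_ne_true
  | app h₁ h₂ =>
      obtain ⟨rfl, rfl⟩ := mk2_inj hE
      exact ⟨_, _, rfl, irSys_iff.2 h₁, irSys_iff.2 h₂⟩
  | _ => exact absurd (congrFun hE []) (by simp)

lemma next_inv_mk1 {sh : Shape} (hsh : arity sh = 1) (hc : sh ≠ Shape.cbox)
    (h : Next M (mk1 sh N)) : ∃ M₁, M = mk1 sh M₁ ∧ Next M₁ N := by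
  generalize hE : mk1 sh N = E at h
  cases irSys_iff.1 h with
  | base h' => exact absurd h'.1 Bool.false_ne_true
  | labs _ h' | iabs _ h' | cabs _ h' | ibox h' =>
      obtain ⟨rfl, rfl⟩ := mk1_inj hE
      exact ⟨_, rfl, irSys_iff.2 h'⟩
  | cbox => exact absurd (mk1_inj hE).1 hc
  | varr | app =>
      have := congrFun hE []
      simp only [mk1_nil, mk0_nil, mk2_nil, Option.some.injEq] at this
      simp [this, arity] at hsh

lemma next_inv_cbox (h : Next M (mk1 Shape.cbox N)) :
    ∃ M₁ K, M = mk1 Shape.cbox M₁ ∧ Star M₁ K ∧ Next K N := by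
  generalize hE : mk1 Shape.cbox N = E at h
  cases irSys_iff.1 h with
  | base h' => exact absurd h'.1 Bool.false_ne_true
  | cbox h' =>
      obtain ⟨-, rfl⟩ := mk1_inj hE
      obtain ⟨-, K, hK, hKN⟩ := h'.of_true
      exact ⟨_, K, rfl, hK, hKN⟩
  | _ => exact absurd (congrFun hE []) (by simp)

end Infinitary

/-- Capture-freeness of `[C/x]` inside those coinductive boxes of `A` that contain a free
occurrence of `x`. -/
def NoCaptureInBoxes (x : ℕ) (C A : T) : Prop :=
  ∀ p q r y, A p = some Shape.cbox → FreeAt x A (p ++ 0 :: q) →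
    bindsX y (A (p ++ 0 :: r)) = true → ¬ Free y C ∧ y ≠ x

/-- The relation closing the coinductive proof of `next_msubst_subst`. -/
def SubstClosure (x : ℕ) (C C' D : T) (b : Bool) (M N : T) : Prop :=
  IRSys b M N ∨ b = false ∧ ∃ A B, Next A B ∧ NoCaptureInBoxes x C A ∧
    M = msubst x C' C A ∧ N = subst x D B

section NextSubst

variable {x : ℕ} {C C' D A B K : T} {b : Bool}

lemma NoCaptureInBoxes.child (h : NoCaptureInBoxes x C A) (hA : bindsX x (A []) = false)
    (i : ℕ) : NoCaptureInBoxes x C (child A i) :=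
  fun p q r y hp hq hr => h (i :: p) q r y hp (freeAt_cons.2 ⟨hA, hq⟩) hr

lemma NoCaptureInBoxes.of_captureFree (h : CaptureFree x C A) : NoCaptureInBoxes x C A :=
  fun _ _ _ y _ _ hr => h y ⟨_, hr⟩

lemma NoCaptureInBoxes.of_not_free (h : ¬ Free x A) : NoCaptureInBoxes x C A :=
  fun _ _ _ _ _ hq _ => absurd ⟨_, hq⟩ h

lemma NoCaptureInBoxes.captureFree_of_cbox (h : NoCaptureInBoxes x C (mk1 Shape.cbox A))
    (hx : Free x A) : CaptureFree x C A :=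
  let ⟨q, hq⟩ := hx
  fun y ⟨r, hr⟩ => h [] q r y rfl (freeAt_cons.2 ⟨rfl, hq⟩) hr

/-- Outside its coinductive boxes `K` is a finite tree, by the inductive nature of `⤳` there,
so the finitely many copies of `C` substituted there can all be advanced to `C'`. -/
lemma star_subst_msubst (hC : Star C C') (h : IRInd (IRCo IRSys) b K B) (hb : b = false) :
    Star (subst x C K) (msubst x C' C K) := by
  induction h with
  | base h => exact absurd (hb ▸ h.1) Bool.false_ne_true
  | varr z =>
      by_cases hz : z = x
      · rwa [hz, subst_of_root_var rfl, msubst_of_root_var rfl]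
      · rw [subst_mk0_of_ne hz, msubst_mk0_of_ne hz]
        exact .refl
  | app _ _ ih₁ ih₂ =>
      rw [subst_mk2, msubst_mk2]
      exact star_mk2 (ih₁ rfl) (ih₂ rfl)
  | labs _ _ ih | iabs _ _ ih | cabs _ _ ih | ibox _ ih =>
      rw [subst_mk1 (by simp), msubst_mk1 (by simp) (by simp)]
      split_ifs
      · exact .refl
      · exact star_mk1 rfl (ih rfl)
  | cbox =>
      rw [subst_mk1_of_not_bindsX (by simp) rfl, msubst_cbox]
      exact .refl

/-- The coinductive step of `next_msubst_subst`: inside a box, `A` reduces to some `K ⤳ B`,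
and `A[C/x] →* K[C/x] →* K[C'/x outside boxes, C/x inside]`. -/
lemma irInd_cbox_msubst_subst (hC : Star C C') (h : IRCo IRSys true A B)
    (hA : NoCaptureInBoxes x C (mk1 Shape.cbox A)) :
    IRInd (IRCo (SubstClosure x C C' D)) false (msubst x C' C (mk1 Shape.cbox A))
      (subst x D (mk1 Shape.cbox B)) := by
  obtain ⟨-, K, hAK, hKB⟩ := h
  rw [msubst_cbox, subst_mk1_of_not_bindsX (by simp) rfl]
  refine .cbox (.base ⟨rfl, msubst x C' C K, ?_, .inr ⟨rfl, K, B, hKB, ?_, rfl, rfl⟩⟩)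
  · by_cases hx : Free x A
    · exact (star_subst hAK (hA.captureFree_of_cbox hx)).trans
        (star_subst_msubst hC (irSys_iff.1 hKB) rfl)
    · have hxK : ¬ Free x K := fun h => hx (star_free hAK h)
      rwa [subst_of_not_free hx, msubst_of_not_free hxK]
  · by_cases hx : Free x A
    · exact .of_captureFree ((hA.captureFree_of_cbox hx).mono fun _ => star_boundIn hAK)
    · exact .of_not_free fun h => hx (star_free hAK h)

lemma irInd_msubst_subst (hC : Star C C') (hD : Next C' D) (h : IRInd (IRCo IRSys) b A B)
    (hb : b = false) (hA : NoCaptureInBoxes x C A) :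
    IRInd (IRCo (SubstClosure x C C' D)) false (msubst x C' C A) (subst x D B) := by
  induction h with
  | base h => exact absurd (hb ▸ h.1) Bool.false_ne_true
  | varr z =>
      by_cases hz : z = x
      · rw [hz, msubst_of_root_var rfl, subst_of_root_var rfl]
        exact (irSys_iff.1 hD).mono (IRCo.mono fun _ _ => .inl)
      · rw [msubst_mk0_of_ne hz, subst_mk0_of_ne hz]
        exact .varr z
  | app _ _ ih₁ ih₂ =>
      rw [msubst_mk2, subst_mk2]
      exact .app (ih₁ rfl (hA.child rfl 0)) (ih₂ rfl (hA.child rfl 1))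
  | labs _ h ih | iabs _ h ih | cabs _ h ih | ibox h ih =>
      rw [msubst_mk1 (by simp) (by simp), subst_mk1 (by simp)]
      split_ifs with hx
      · exact (h.mono (IRCo.mono fun _ _ => .inl)).mk1 rfl (by simp)
      · exact (ih rfl (hA.child (by simpa using hx) 0)).mk1 rfl (by simp)
  | cbox h => exact irInd_cbox_msubst_subst hC h.of_true hA

theorem next_msubst_subst (hC : Star C C') (hD : Next C' D) (hAB : Next A B)
    (hA : NoCaptureInBoxes x C A) : Next (msubst x C' C A) (subst x D B) := by
  refine ⟨SubstClosure x C C' D, ?_, .inr ⟨rfl, A, B, hAB, hA, rfl, rfl⟩⟩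
  rintro b M N (h | ⟨rfl, A, B, hAB, hA, rfl, rfl⟩)
  · exact (irSys_iff.1 h).mono (IRCo.mono fun _ _ => .inl)
  · exact irInd_msubst_subst hC hD (irSys_iff.1 hAB) rfl hA

end NextSubst

/-! ### Well-formation in ℓΛ∞^{4S} -/

/-- The patterns `↑x` and `#x`: they are shared by both premises of an application, kept by
(mi), turned into `#x` by (mc), and never rebound below. -/
def CoPat (o : Option Pat4) : Prop := o = some Pat4.cm ∨ o = some Pat4.am

/-- How the pattern of a free variable changes from a node to a child not in a coinductive box:
it is kept, dropped if linear or `↓x`, or `!x` becomes `x` (rule (mi)). -/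
def InnerStep (o o' : Option Pat4) : Prop :=
  o' = o ∨ o' = none ∧ ¬ CoPat o ∨ o = some Pat4.im ∧ o' = some Pat4.lin

/-- How the pattern of a free variable changes from a coinductive box to its content. -/
def BoxStep (o o' : Option Pat4) : Prop :=
  o' = some Pat4.am ∧ CoPat o ∨ o' = none ∧ ¬ CoPat o

def ChildStep (s : Option Shape) (o o' : Option Pat4) : Prop :=
  s = some Shape.cbox ∧ BoxStep o o' ∨ s ≠ some Shape.cbox ∧ InnerStep o o'

section WellFormed

variable {Γ Γ' Γ₁ Γ₂ : Env4} {x y : ℕ} {A M N : T}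

lemma split4_innerStep (h : Split4 Γ Γ₁ Γ₂) (y : ℕ) :
    InnerStep (Γ y) (Γ₁ y) ∧ InnerStep (Γ y) (Γ₂ y) := by
  rcases h y with ⟨-, h₁, h₂⟩ | ⟨h₀, h₁, h₂⟩ | ⟨h₀ | h₀, ⟨h₁, h₂⟩ | ⟨h₁, h₂⟩⟩ <;>
    simp_all [InnerStep, CoPat]

lemma split4_left_eq_of_coPat (h : Split4 Γ Γ₁ Γ₂) (hy : CoPat (Γ₂ y)) : Γ₁ y = Γ₂ y := by
  rcases h y with ⟨-, h₁, h₂⟩ | ⟨h₀, h₁, h₂⟩ | ⟨h₀ | h₀, ⟨h₁, h₂⟩ | ⟨h₁, h₂⟩⟩ <;>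
    simp_all [CoPat]

lemma miEnv_innerStep (h : MiEnv Γ Γ') (y : ℕ) : InnerStep (Γ y) (Γ' y) := by
  rcases h y with ⟨h₁, h₂⟩ | ⟨h₁, h₂⟩ | ⟨h₁, h₂⟩ | ⟨h₁, h₂⟩ | ⟨h₁, h₂⟩ <;>
    simp_all [InnerStep, CoPat]

lemma mcEnv_boxStep (h : McEnv Γ Γ') (y : ℕ) : BoxStep (Γ y) (Γ' y) := by
  rcases h y with ⟨h₁, h₂⟩ | ⟨h₁, h₂⟩ | ⟨h₁, h₂⟩ | ⟨h₁, h₂⟩ <;> simp_all [BoxStep, CoPat]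

section Steps

variable {s : Option Shape} {o o' : Option Pat4}

lemma InnerStep.eq_of_coPat (h : InnerStep o o') (ho : CoPat o) : o' = o := by
  rcases h with h | ⟨-, h⟩ | ⟨rfl, -⟩
  · exact h
  · exact absurd ho h
  · simp [CoPat] at ho

lemma InnerStep.not_coPat (h : InnerStep o o') (ho : ¬ CoPat o) : ¬ CoPat o' := by
  rcases h with rfl | ⟨rfl, -⟩ | ⟨-, rfl⟩ <;> simp_all [CoPat]

lemma BoxStep.eq_none (h : BoxStep o o') (ho : ¬ CoPat o) : o' = none := by
  rcases h with ⟨-, h⟩ | ⟨h, -⟩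
  · exact absurd h ho
  · exact h

lemma BoxStep.eq_am (h : BoxStep o o') (ho : o' ≠ none) : o' = some Pat4.am := by
  rcases h with ⟨h, -⟩ | ⟨h, -⟩
  · exact h
  · exact absurd h ho

lemma BoxStep.coPat_of_ne_none (h : BoxStep o o') (ho : o' ≠ none) : CoPat o := by
  rcases h with ⟨-, h⟩ | ⟨h, -⟩
  · exact h
  · exact absurd h ho

lemma ChildStep.boxStep (h : ChildStep s o o') (hs : s = some Shape.cbox) : BoxStep o o' :=
  (h.resolve_right fun h' => h'.1 hs).2

lemma ChildStep.innerStep (h : ChildStep s o o') (hs : s ≠ some Shape.cbox) : InnerStep o o' :=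
  (h.resolve_left fun h' => hs h'.1).2

lemma ChildStep.coPat (h : ChildStep s o o') (ho : CoPat o) : CoPat o' := by
  rcases h with ⟨-, h | h⟩ | ⟨-, h⟩
  · exact .inr h.1
  · exact absurd ho h.2
  · exact h.eq_of_coPat ho ▸ ho

lemma ChildStep.ne_none (h : ChildStep s o o') (ho : o' ≠ none) : o ≠ none := by
  rcases h with ⟨-, h⟩ | ⟨-, h | ⟨h, -⟩ | ⟨rfl, -⟩⟩
  · rcases h.coPat_of_ne_none ho with h | h <;> simp [h]
  · exact h ▸ ho
  · exact absurd h ho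
  · simp

end Steps

lemma WF4Step.mono {R R' : Env4 → T → Prop} (hR : ∀ Γ M, R Γ M → R' Γ M)
    (h : WF4Step R Γ M) : WF4Step R' Γ M := by
  induction h with
  | base h => exact .base (hR _ _ h)
  | vl z h₁ h₂ => exact .vl z h₁ h₂
  | vd z h₁ h₂ => exact .vd z h₁ h₂
  | va z h₁ h₂ => exact .va z h₁ h₂
  | app hs _ _ ih₁ ih₂ => exact .app hs ih₁ ih₂
  | ll hz _ ih => exact .ll hz ih
  | li1 hz _ ih => exact .li1 hz ih
  | li2 hz _ ih => exact .li2 hz ih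
  | lc hz _ ih => exact .lc hz ih
  | mi hmi _ ih => exact .mi hmi ih

lemma WF4.unfold (h : WF4 Γ M) : WF4Step (CoStep4 WF4) Γ M :=
  let ⟨S, hS, h⟩ := h
  (hS _ _ h).mono fun _ _ ⟨Γ', N, hmc, hM, hN⟩ => ⟨Γ', N, hmc, hM, S, hS, hN⟩

lemma wf4_iff : WF4 Γ M ↔ WF4Step (CoStep4 WF4) Γ M :=
  ⟨WF4.unfold, fun h => ⟨fun Γ M => WF4Step (CoStep4 WF4) Γ M,
    fun _ _ h => h.mono fun _ _ ⟨Γ', N, hmc, hM, hN⟩ => ⟨Γ', N, hmc, hM, hN.unfold⟩, h⟩⟩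

lemma WF4.root_var (h : WF4 Γ A) (hA : A [] = some (Shape.var y)) :
    Γ y = some Pat4.lin ∨ Γ y = some Pat4.dm ∨ Γ y = some Pat4.am := by
  cases h.unfold with
  | base h' => obtain ⟨_, _, _, rfl, _⟩ := h'; simp at hA
  | vl _ hz | vd _ hz | va _ hz =>
      simp only [mk0_nil, Option.some.injEq, Shape.var.injEq] at hA
      subst hA; simp [hz]
  | _ => simp at hA

lemma WF4.root_bindsX (h : WF4 Γ A) (hA : bindsX y (A []) = true) : Γ y = none := by
  cases h.unfold with
  | base h' => obtain ⟨_, _, _, rfl, _⟩ := h'; simp [bindsX] at hA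
  | ll hz _ | li1 hz _ | li2 hz _ | lc hz _ =>
      simp only [mk1_nil, bindsX, beq_iff_eq] at hA; rwa [← hA]
  | _ => simp [bindsX] at hA

lemma WF4.child (h : WF4 Γ A) (i : ℕ) : child A i = bot ∨ ∃ Γ', WF4 Γ' (child A i) ∧
    ∀ y, bindsX y (A []) = false → ChildStep (A []) (Γ y) (Γ' y) := by
  cases h.unfold with
  | base h' =>
      obtain ⟨Γ', N, hmc, rfl, hN⟩ := h'
      cases i
      · exact .inr ⟨Γ', hN, fun y _ => .inl ⟨rfl, mcEnv_boxStep hmc y⟩⟩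
      · exact .inl rfl
  | vl | vd | va => exact .inl (child_mk0 _ i)
  | app hs h₁ h₂ =>
      match i with
      | 0 => exact .inr ⟨_, wf4_iff.2 h₁, fun y _ => .inr ⟨by simp, (split4_innerStep hs y).1⟩⟩
      | 1 => exact .inr ⟨_, wf4_iff.2 h₂, fun y _ => .inr ⟨by simp, (split4_innerStep hs y).2⟩⟩
      | _ + 2 => exact .inl rfl
  | @ll _ z _ _ h' | @li1 _ z _ _ h' | @li2 _ z _ _ h' | @lc _ z _ _ h' =>
      cases i
      · refine .inr ⟨_, wf4_iff.2 h', fun y hy => .inr ⟨by simp, .inl ?_⟩⟩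
        simp only [mk1_nil, bindsX, beq_eq_false_iff_ne] at hy
        simp [Env4.upd, Ne.symm hy]
      · exact .inl rfl
  | mi hmi h' =>
      cases i
      · exact .inr ⟨_, wf4_iff.2 h', fun y _ => .inr ⟨by simp, miEnv_innerStep hmi y⟩⟩
      · exact .inl rfl

lemma ne_bot_of_freeAt {B : T} {q : List ℕ} (h : FreeAt y B q) : B ≠ bot := by
  rintro rfl; exact not_freeAt_bot h

lemma WF4.bindsX_eq_false_of_coPat (h : WF4 Γ A) (hy : CoPat (Γ y)) (p : List ℕ) :
    bindsX y (A p) = false := by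
  have hroot {Γ A} (h : WF4 Γ A) (hy : CoPat (Γ y)) : bindsX y (A []) = false :=
    Bool.eq_false_iff.2 fun hb => by rcases hy with hy | hy <;> simp [h.root_bindsX hb] at hy
  induction p generalizing Γ A with
  | nil => exact hroot h hy
  | cons i q ih =>
      rcases h.child i with hc | ⟨Γ', h', hstep⟩
      · rw [show A (i :: q) = none from congrFun hc q]; rfl
      · exact ih h' ((hstep y (hroot h hy)).coPat hy)

lemma WF4.ne_none_of_freeAt {p : List ℕ} (h : WF4 Γ A) (hp : FreeAt y A p) : Γ y ≠ none := by
  induction p generalizing Γ A with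
  | nil => rcases h.root_var (freeAt_nil.1 hp) with h | h | h <;> simp [h]
  | cons i q ih =>
      obtain ⟨hb, hq⟩ := freeAt_cons.1 hp
      obtain ⟨Γ', h', hstep⟩ := (h.child i).resolve_left (ne_bot_of_freeAt hq)
      exact (hstep y hb).ne_none (ih h' hq)

lemma WF4.coPat_of_free_cbox (h : WF4 Γ (mk1 Shape.cbox N)) (hy : Free y N) : CoPat (Γ y) := by
  obtain ⟨q, hq⟩ := hy
  obtain ⟨Γ', h', hstep⟩ := (h.child 0).resolve_left (ne_bot_of_freeAt hq)
  exact ((hstep y rfl).boxStep rfl).coPat_of_ne_none (h'.ne_none_of_freeAt hq)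

/-- Inside a coinductive box every free variable is `#x`, hence not rebound in the box. -/
lemma WF4.bindsX_eq_false_of_freeAt_box {p q : List ℕ} (h : WF4 Γ A)
    (hA : A p = some Shape.cbox) (hx : FreeAt x A (p ++ 0 :: q)) (r : List ℕ) :
    bindsX x (A (p ++ 0 :: r)) = false := by
  induction p generalizing Γ A with
  | nil =>
      obtain ⟨hb, hq⟩ := freeAt_cons.1 hx
      obtain ⟨Γ', h', hstep⟩ := (h.child 0).resolve_left (ne_bot_of_freeAt hq)
      exact h'.bindsX_eq_false_of_coPat
        (.inr (((hstep x hb).boxStep hA).eq_am (h'.ne_none_of_freeAt hq))) r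
  | cons i p ih =>
      obtain ⟨-, hq⟩ := freeAt_cons.1 hx
      obtain ⟨Γ', h', -⟩ := (h.child i).resolve_left (ne_bot_of_freeAt hq)
      exact ih h' hA hq

lemma WF4.not_crossesBox {p : List ℕ} (h : WF4 Γ A) (hp : FreeAt x A p) (hx : ¬ CoPat (Γ x)) :
    ¬ CrossesBox A p := by
  induction p generalizing Γ A with
  | nil => rintro ⟨_, _, _, he, -⟩; simp at he
  | cons i q ih =>
      obtain ⟨hb, hq⟩ := freeAt_cons.1 hp
      obtain ⟨Γ', h', hstep⟩ := (h.child i).resolve_left (ne_bot_of_freeAt hq)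
      rw [crossesBox_cons]
      by_cases hA : A [] = some Shape.cbox
      · exact absurd (((hstep x hb).boxStep hA).eq_none hx) (h'.ne_none_of_freeAt hq)
      · exact not_or.2 ⟨hA, ih h' hq (((hstep x hb).innerStep hA).not_coPat hx)⟩

lemma WF4.freeOnlyInBoxes (h : WF4 Γ A) (hx : Γ x = some Pat4.cm) : FreeOnlyInBoxes x A := by
  intro p hp
  induction p generalizing Γ A with
  | nil => rcases h.root_var (freeAt_nil.1 hp) with h | h | h <;> simp [h] at hx
  | cons i q ih =>
      obtain ⟨hb, hq⟩ := freeAt_cons.1 hp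
      obtain ⟨Γ', h', hstep⟩ := (h.child i).resolve_left (ne_bot_of_freeAt hq)
      rw [crossesBox_cons]
      by_cases hA : A [] = some Shape.cbox
      · exact .inl hA
      · exact .inr (ih h' (((hstep x hb).innerStep hA).eq_of_coPat (.inl hx) ▸ hx) hq)

lemma WF4.noCaptureInBoxes {C : T} (h : WF4 Γ A) (hx : ¬ CoPat (Γ x)) :
    NoCaptureInBoxes x C A :=
  fun p q _ _ hp hq _ => absurd ⟨p, 0, q, rfl, hp⟩ (h.not_crossesBox hq hx)

/-- The capture condition for a coinductive redex `(λ↑x.M₁)(§M₂)`: the free variables of `M₂`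
are `↑`/`#` variables, which are never rebound in `M₁`. -/
lemma noCaptureInBoxes_of_coi {M₁ M₂ : T} (hs : Split4 Γ Γ₁ Γ₂) (hx : Γ₁ x = none)
    (h₁ : WF4 (Γ₁.upd x (some Pat4.cm)) M₁) (h₂ : WF4 Γ₂ (mk1 Shape.cbox M₂)) :
    NoCaptureInBoxes x M₂ M₁ := by
  intro p q r y hp hq hr
  refine ⟨fun hy => ?_, fun hyx => ?_⟩
  · have hco := h₂.coPat_of_free_cbox hy
    rw [← split4_left_eq_of_coPat hs hco] at hco
    have hyx : y ≠ x := by rintro rfl; simp [hx, CoPat] at hco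
    have := h₁.bindsX_eq_false_of_coPat (by rwa [Env4.upd, if_neg hyx]) (p ++ 0 :: r)
    simp [this] at hr
  · subst hyx
    simp [h₁.bindsX_eq_false_of_freeAt_box hp hq r] at hr

lemma wf4_inv_mk2 (h : WF4 Γ (mk2 M N)) : ∃ Γ₁ Γ₂, Split4 Γ Γ₁ Γ₂ ∧ WF4 Γ₁ M ∧ WF4 Γ₂ N := by
  generalize hE : mk2 M N = E at h
  cases h.unfold with
  | base h' => obtain ⟨_, _, _, rfl, _⟩ := h'; exact absurd (congrFun hE []) (by simp)
  | app hs h₁ h₂ =>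
      obtain ⟨rfl, rfl⟩ := mk2_inj hE
      exact ⟨_, _, hs, wf4_iff.2 h₁, wf4_iff.2 h₂⟩
  | _ => exact absurd (congrFun hE []) (by simp)

lemma wf4_inv_mk1 {sh : Shape} (hsh : arity sh = 1) (h : WF4 Γ (mk1 sh M)) : ∃ Γ', WF4 Γ' M := by
  generalize hE : mk1 sh M = E at h
  cases h.unfold with
  | base h' =>
      obtain ⟨Γ', _, _, rfl, hN⟩ := h'
      exact ⟨Γ', (mk1_inj hE).2 ▸ hN⟩
  | ll _ h' | li1 _ h' | li2 _ h' | lc _ h' | mi _ h' => exact ⟨_, (mk1_inj hE).2 ▸ wf4_iff.2 h'⟩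
  | vl | vd | va | app =>
      have := congrFun hE []
      simp only [mk1_nil, mk0_nil, mk2_nil, Option.some.injEq] at this
      simp [this, arity] at hsh

lemma wf4_inv_labs (h : WF4 Γ (mk1 (Shape.labs x) M)) : ∃ Δ, WF4 Δ M ∧ ¬ CoPat (Δ x) := by
  generalize hE : mk1 (Shape.labs x) M = E at h
  cases h.unfold with
  | base h' => obtain ⟨_, _, _, rfl, _⟩ := h'; exact absurd (congrFun hE []) (by simp)
  | ll _ h' =>
      obtain ⟨he, rfl⟩ := mk1_inj hE
      cases he
      exact ⟨_, wf4_iff.2 h', by simp [Env4.upd, CoPat]⟩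
  | _ => exact absurd (congrFun hE []) (by simp)

lemma wf4_inv_iabs (h : WF4 Γ (mk1 (Shape.iabs x) M)) : ∃ Δ, WF4 Δ M ∧ ¬ CoPat (Δ x) := by
  generalize hE : mk1 (Shape.iabs x) M = E at h
  cases h.unfold with
  | base h' => obtain ⟨_, _, _, rfl, _⟩ := h'; exact absurd (congrFun hE []) (by simp)
  | li1 _ h' | li2 _ h' =>
      obtain ⟨he, rfl⟩ := mk1_inj hE
      cases he
      exact ⟨_, wf4_iff.2 h', by simp [Env4.upd, CoPat]⟩
  | _ => exact absurd (congrFun hE []) (by simp)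

lemma wf4_inv_cabs (h : WF4 Γ (mk1 (Shape.cabs x) M)) :
    Γ x = none ∧ WF4 (Γ.upd x (some Pat4.cm)) M := by
  generalize hE : mk1 (Shape.cabs x) M = E at h
  cases h.unfold with
  | base h' => obtain ⟨_, _, _, rfl, _⟩ := h'; exact absurd (congrFun hE []) (by simp)
  | lc hx h' =>
      obtain ⟨he, rfl⟩ := mk1_inj hE
      cases he
      exact ⟨hx, wf4_iff.2 h'⟩
  | _ => exact absurd (congrFun hE []) (by simp)

end WellFormed

/-! ### Postponement -/

section Postponement

variable {Γ : Env4} {M N L : T}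

lemma postpone_basic (hb : Basic N L) (hM : WF4 Γ M) (hn : Next M N) :
    ∃ P, Red [] M P ∧ Next P L := by
  cases hb with
  | lin x N₁ N₂ =>
      obtain ⟨F, M₂, rfl, hF, h₂⟩ := next_inv_mk2 hn
      obtain ⟨M₁, rfl, h₁⟩ := next_inv_mk1 rfl (by simp) hF
      obtain ⟨Γ₁, -, -, hw, -⟩ := wf4_inv_mk2 hM
      obtain ⟨Δ, hΔ, hx⟩ := wf4_inv_labs hw
      refine ⟨_, .base (.lin x M₁ M₂), ?_⟩
      simpa only [msubst_self] using next_msubst_subst .refl h₂ h₁ (hΔ.noCaptureInBoxes hx)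
  | ind x N₁ N₂ =>
      obtain ⟨F, G, rfl, hF, hG⟩ := next_inv_mk2 hn
      obtain ⟨M₁, rfl, h₁⟩ := next_inv_mk1 rfl (by simp) hF
      obtain ⟨M₂, rfl, h₂⟩ := next_inv_mk1 rfl (by simp) hG
      obtain ⟨Γ₁, -, -, hw, -⟩ := wf4_inv_mk2 hM
      obtain ⟨Δ, hΔ, hx⟩ := wf4_inv_iabs hw
      refine ⟨_, .base (.ind x M₁ M₂), ?_⟩
      simpa only [msubst_self] using next_msubst_subst .refl h₂ h₁ (hΔ.noCaptureInBoxes hx)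
  | coi x N₁ N₂ =>
      obtain ⟨F, G, rfl, hF, hG⟩ := next_inv_mk2 hn
      obtain ⟨M₁, rfl, h₁⟩ := next_inv_mk1 rfl (by simp) hF
      obtain ⟨M₂, K, rfl, hK, h₂⟩ := next_inv_cbox hG
      obtain ⟨Γ₁, Γ₂, hs, hw₁, hw₂⟩ := wf4_inv_mk2 hM
      obtain ⟨hx, hΔ⟩ := wf4_inv_cabs hw₁
      refine ⟨_, .base (.coi x M₁ M₂), ?_⟩
      rw [← msubst_of_freeOnlyInBoxes (C' := K) (hΔ.freeOnlyInBoxes (by simp [Env4.upd]))]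
      exact next_msubst_subst hK h₂ h₁ (noCaptureInBoxes_of_coi hs hx hΔ hw₂)

lemma postpone_red {s : List Bool} (hred : Red s N L) (hs : s.count true = 0) (hM : WF4 Γ M)
    (hn : Next M N) : ∃ P, Red s M P ∧ Next P L := by
  induction hred generalizing Γ M with
  | base hb => exact postpone_basic hb hM hn
  | appL Q _ ih =>
      obtain ⟨M₁, M₂, rfl, h₁, h₂⟩ := next_inv_mk2 hn
      obtain ⟨Γ₁, -, -, hw, -⟩ := wf4_inv_mk2 hM
      obtain ⟨P, hP, hPL⟩ := ih hs hw h₁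
      exact ⟨_, .appL _ hP, next_mk2 hPL h₂⟩
  | appR Q _ ih =>
      obtain ⟨M₁, M₂, rfl, h₁, h₂⟩ := next_inv_mk2 hn
      obtain ⟨-, Γ₂, -, -, hw⟩ := wf4_inv_mk2 hM
      obtain ⟨P, hP, hPL⟩ := ih hs hw h₂
      exact ⟨_, .appR _ hP, next_mk2 h₁ hPL⟩
  | labs _ _ ih | iabs _ _ ih | cabs _ _ ih | ibox _ ih =>
      obtain ⟨M₁, rfl, h₁⟩ := next_inv_mk1 rfl (by simp) hn
      obtain ⟨_, hw⟩ := wf4_inv_mk1 rfl hM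
      obtain ⟨P, hP, hPL⟩ := ih (by simpa using hs) hw h₁
      exact ⟨_, by constructor; exact hP, next_mk1 rfl (by simp) hPL⟩
  | cbox => simp at hs

end Postponement

/-- Postponement: if `M ⤳ N` and `N` reduces at depth 0 to `L`, then there is
`P` with `M` reducing at depth 0 to `P` and `P ⤳ L`. -/
theorem postponement (Γ : Env4) (M N L : T)
    (h : WF4 Γ M) (hn : Next M N) (hr : RedAt 0 N L) :
    ∃ P : T, RedAt 0 M P ∧ Next P L := by
  obtain ⟨s, hs, hred⟩ := hr
  obtain ⟨P, hMP, hPL⟩ := postpone_red hred hs h hn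
  exact ⟨P, ⟨s, hs, hMP⟩, hPL⟩

end LLInf
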